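/- Let f_d(x₁,x₂) and g_d(y₁,y₂) be homogeneous polynomials of degree d ≥ 1 over an algebraically closed field, each with d pairwise distinct roots in ℙ¹ (i.e., squarefree as binary forms). Then the hypersurface in ℙ³ defined by f_d(x₁,x₂) + g_d(y₁,y₂) = 0 is smooth. -/

import Mathlib

open MvPolynomial

namespace SmoothAux

variable {k : Type*} [Field k]

lemma degree_fin2 (d : Fin 2 →₀ ℕ) : d.degree = d 0 + d 1 := by
  rw [Finsupp.degree_apply, Finset.sum_subset (Finset.subset_univ d.support)
    (fun i _ h => Finsupp.notMem_support_iff.mp h), Fin.sum_univ_two]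

lemma coeff_pderiv (i : Fin 2) (m : Fin 2 →₀ ℕ) (q : MvPolynomial (Fin 2) k) :
    coeff m (pderiv i q) = (m i + 1) * coeff (m + Finsupp.single i 1) q := by
  induction q using MvPolynomial.induction_on' with
  | add p q hp hq => simp [hp, hq, mul_add]
  | monomial s a =>
      rw [pderiv_monomial, coeff_monomial, coeff_monomial]
      by_cases hsi : s i = 0
      · have hne : s ≠ m + Finsupp.single i 1 := by
          intro h; rw [h] at hsi; simp at hsi
        simp [hsi, hne]
      · have key : s - Finsupp.single i 1 = m ↔ s = m + Finsupp.single i 1 := by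
          simp only [Finsupp.ext_iff, Finsupp.tsub_apply, Finsupp.add_apply,
            Finsupp.single_apply]
          constructor <;> intro h j <;> have hj := h j <;>
            by_cases hij : i = j
          · subst hij; simp only [if_pos rfl, if_true] at hj ⊢; omega
          · simp only [if_neg hij] at hj ⊢; omega
          · subst hij; simp only [if_pos rfl, if_true] at hj ⊢; omega
          · simp only [if_neg hij] at hj ⊢; omega
        by_cases h : s = m + Finsupp.single i 1
        · rw [if_pos (key.mpr h), if_pos h, h]
          simp [mul_comm]
        · rw [if_neg (fun hh => h (key.mp hh)), if_neg h, mul_zero]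

lemma pderiv_isHomogeneous {q : MvPolynomial (Fin 2) k} {n : ℕ}
    (hq : q.IsHomogeneous n) (i : Fin 2) : (pderiv i q).IsHomogeneous (n - 1) := by
  intro m hm
  rw [coeff_pderiv] at hm
  have h2 : coeff (m + Finsupp.single i 1) q ≠ 0 := fun h => hm (by simp [h])
  have h3 := hq h2
  rw [show (Finsupp.weight 1 : (Fin 2 →₀ ℕ) →+ ℕ) = Finsupp.degree from Finsupp.degree_eq_weight_one.symm] at h3 ⊢
  rw [degree_fin2] at h3 ⊢
  have hs1 : (Finsupp.single i 1 : Fin 2 →₀ ℕ) 0 + (Finsupp.single i 1 : Fin 2 →₀ ℕ) 1 = 1 := by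
    fin_cases i <;> simp
  simp only [Finsupp.add_apply] at h3
  omega

lemma pderiv_aeval_fin2 (g : Fin 2 → MvPolynomial (Fin 2) k) (j : Fin 2)
    (p : MvPolynomial (Fin 2) k) :
    pderiv j (aeval g p) =
      aeval g (pderiv 0 p) * pderiv j (g 0) + aeval g (pderiv 1 p) * pderiv j (g 1) := by
  induction p using MvPolynomial.induction_on with
  | C a => simp
  | add p q hp hq => simp only [map_add, hp, hq]; ring
  | mul_X p i hp =>
      rw [map_mul, aeval_X, pderiv_mul, hp]
      have e : ∀ l : Fin 2, (pderiv l) (p * X i) = pderiv l p * X i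
          + p * (if i = l then 1 else 0) := by
        intro l
        rw [pderiv_mul]
        congr 1
        fin_cases i <;> fin_cases l <;> simp [pderiv_X, Pi.single_apply]
      rw [e 0, e 1]
      by_cases hi : i = 0
      · subst hi
        simp only [if_pos rfl, if_true, if_neg (by decide : (0 : Fin 2) ≠ 1), map_one, mul_one, mul_zero,
          add_zero, map_add, map_mul, aeval_X]
        ring
      · have hi1 : i = 1 := by omega
        subst hi1
        simp only [if_pos rfl, if_true, if_neg (by decide : (1 : Fin 2) ≠ 0), map_one, mul_one, mul_zero,
          add_zero, map_add, map_mul, aeval_X]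
        ring

lemma eval_aeval_fin2 (v : Fin 2 → k) (g : Fin 2 → MvPolynomial (Fin 2) k)
    (p : MvPolynomial (Fin 2) k) :
    eval v (aeval g p) = eval (fun i => eval v (g i)) p := by
  induction p using MvPolynomial.induction_on with
  | C a => simp
  | add p q hp hq => simp only [map_add, hp, hq]
  | mul_X p i hp => simp only [map_mul, aeval_X, eval_mul, eval_X, hp]

lemma eval_one_zero {n : ℕ} {q : MvPolynomial (Fin 2) k} (hq : q.IsHomogeneous n) :
    eval ![1, 0] q = coeff (Finsupp.single 0 n) q := by
  rw [eval_eq']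
  rw [Finset.sum_eq_single (Finsupp.single 0 n)]
  · rw [Fin.prod_univ_two]
    simp
  · intro d hd hne
    have hdeg : d.degree = n := by
      by_contra hc
      exact (mem_support_iff.mp hd) (hq.coeff_eq_zero hc)
    have hd1 : d 1 ≠ 0 := by
      intro h1
      apply hne
      ext j
      fin_cases j
      · have := degree_fin2 d
        simp only [h1, add_zero] at this
        simp [← hdeg, this]
      · simp [h1, Finsupp.single_apply]
    rw [Fin.prod_univ_two]
    simp [zero_pow hd1]
  · intro h
    rw [notMem_support_iff.mp h]
    exact zero_mul _

lemma X1_sq_dvd {h : MvPolynomial (Fin 2) k}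
    (hh : ∀ m ∈ h.support, 2 ≤ m 1) : (X 1 : MvPolynomial (Fin 2) k) * X 1 ∣ h := by
  have := (as_sum h).symm
  rw [as_sum h]
  apply Finset.dvd_sum
  intro m hm
  have h2 := hh m hm
  refine ⟨monomial (m - Finsupp.single 1 2) (coeff m h), ?_⟩
  rw [show (X (1 : Fin 2) : MvPolynomial (Fin 2) k) * X 1 = monomial (Finsupp.single 1 2) 1 by
    rw [← X_pow_eq_monomial]; ring]
  rw [monomial_mul, one_mul]
  have hexp : Finsupp.single 1 2 + (m - Finsupp.single 1 2) = m := by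
    ext j
    rw [Finsupp.add_apply, Finsupp.tsub_apply]
    by_cases hj : j = 0
    · subst hj; simp
    · have hj1 : j = 1 := by omega
      subst hj1
      simp only [Finsupp.single_eq_same]
      omega
  rw [hexp]

lemma not_isUnit_of_eval_eq_zero {p : MvPolynomial (Fin 2) k} (v : Fin 2 → k)
    (hv : eval v p = 0) : ¬ IsUnit p := fun hu => by
  simpa [hv] using hu.map (eval v)

lemma key [CharZero k] {d : ℕ} (hd : 1 ≤ d) {f : MvPolynomial (Fin 2) k}
    (hf : f.IsHomogeneous d) (hsf : Squarefree f) {a b u0 u1 : k}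
    (hdet : a * u1 - b * u0 ≠ 0)
    (h0 : eval ![a, b] (pderiv 0 f) = 0) (h1 : eval ![a, b] (pderiv 1 f) = 0) : False := by
  classical
  set g : Fin 2 → MvPolynomial (Fin 2) k :=
    ![C a * X 0 + C u0 * X 1, C b * X 0 + C u1 * X 1] with hg
  set h : MvPolynomial (Fin 2) k := aeval g f with hh
  have hgh : ∀ i, (g i).IsHomogeneous 1 := by
    intro i
    fin_cases i <;>
      exact (((isHomogeneous_X k _).C_mul _)).add (((isHomogeneous_X k _).C_mul _))
  have hhom : h.IsHomogeneous d := by have := hf.aeval g hgh; rwa [one_mul] at this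
  have hev10 : (fun i => eval ![1, 0] (g i)) = ![a, b] := by
    funext i
    fin_cases i <;> simp [hg]
  have hgradh : ∀ j : Fin 2, eval ![1, 0] (pderiv j h) = 0 := by
    intro j
    rw [hh, pderiv_aeval_fin2]
    simp only [map_add, map_mul, eval_aeval_fin2, hev10, h0, h1, zero_mul, add_zero]
  have hd0 : coeff (Finsupp.single 0 d) h = 0 := by
    have hp0 : (pderiv 0 h).IsHomogeneous (d - 1) := pderiv_isHomogeneous hhom 0
    have hz := hgradh 0
    rw [eval_one_zero hp0, coeff_pderiv] at hz
    have hsingle : Finsupp.single (0 : Fin 2) (d - 1) + Finsupp.single 0 1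
        = Finsupp.single 0 d := by
      rw [← Finsupp.single_add]
      congr 1
      omega
    rw [hsingle] at hz
    rcases mul_eq_zero.mp hz with hz' | hz'
    · exact absurd hz' (Nat.cast_add_one_ne_zero _)
    · exact hz'
  have hd1 : coeff (Finsupp.single 0 (d - 1) + Finsupp.single 1 1) h = 0 := by
    have hp1 : (pderiv 1 h).IsHomogeneous (d - 1) := pderiv_isHomogeneous hhom 1
    have hz := hgradh 1
    rw [eval_one_zero hp1, coeff_pderiv] at hz
    simpa using hz
  have hdvd : (X 1 : MvPolynomial (Fin 2) k) * X 1 ∣ h := by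
    apply X1_sq_dvd
    intro m hm
    by_contra hlt
    push_neg at hlt
    have hm' := mem_support_iff.mp hm
    have hdeg : m.degree = d := by
      by_contra hc
      exact hm' (hhom.coeff_eq_zero hc)
    rw [degree_fin2] at hdeg
    have hcases : m 1 = 0 ∨ m 1 = 1 := by omega
    rcases hcases with h1' | h1'
    · apply hm'
      have hm0 : m = Finsupp.single 0 d := by
        ext j
        by_cases hj : j = 0
        · subst hj
          simp only [Finsupp.single_eq_same]
          omega
        · have hj1 : j = 1 := by omega
          subst hj1
          rw [h1', Finsupp.single_apply]
          simp
      rw [hm0]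
      exact hd0
    · apply hm'
      have hm0 : m = Finsupp.single 0 (d - 1) + Finsupp.single 1 1 := by
        ext j
        rw [Finsupp.add_apply]
        by_cases hj : j = 0
        · subst hj
          simp only [Finsupp.single_eq_same, Finsupp.single_apply]
          simp only [show ((1 : Fin 2) = 0) = False by simp, if_false]
          omega
        · have hj1 : j = 1 := by omega
          subst hj1
          rw [h1', Finsupp.single_apply, Finsupp.single_eq_same]
          simp
      rw [hm0]
      exact hd1
  -- transport back via the inverse substitution
  set det : k := a * u1 - b * u0 with hdetdef
  set τ : MvPolynomial (Fin 2) k →ₐ[k] MvPolynomial (Fin 2) k :=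
    aeval ![C (u1 / det) * X 0 - C (u0 / det) * X 1,
           C (-(b / det)) * X 0 + C (a / det) * X 1] with hτ
  have hτg : ∀ i : Fin 2, τ (g i) = X i := by
    intro i
    apply MvPolynomial.funext
    intro x
    rw [hτ, eval_aeval_fin2]
    fin_cases i <;>
      · simp [hg]
        field_simp
        ring
  have hτσ : ∀ p : MvPolynomial (Fin 2) k, τ (aeval g p) = p := by
    intro p
    induction p using MvPolynomial.induction_on with
    | C c => simp
    | add p q hp hq => simp only [map_add, hp, hq]
    | mul_X p i hp => rw [map_mul, aeval_X, map_mul, hp, hτg]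
  have hfd : τ (X 1) * τ (X 1) ∣ f := by
    have := map_dvd τ hdvd
    rw [map_mul] at this
    rwa [hh, hτσ f] at this
  have hu := hsf _ hfd
  refine not_isUnit_of_eval_eq_zero ![a, b] ?_ hu
  rw [hτ]
  simp only [aeval_X]
  simp
  ring

lemma key' [CharZero k] {d : ℕ} (hd : 1 ≤ d) {f : MvPolynomial (Fin 2) k}
    (hf : f.IsHomogeneous d) (hsf : Squarefree f) {a b : k}
    (h0 : eval ![a, b] (pderiv 0 f) = 0) (h1 : eval ![a, b] (pderiv 1 f) = 0) :
    a = 0 ∧ b = 0 := by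
  by_contra hab
  by_cases ha : a = 0
  · have hb : b ≠ 0 := fun hb => hab ⟨ha, hb⟩
    exact key hd hf hsf (u0 := 1) (u1 := 0)
      (by simpa [ha] using neg_ne_zero.mpr hb) h0 h1
  · exact key hd hf hsf (u0 := 0) (u1 := 1) (by simpa using ha) h0 h1

end SmoothAux


open SmoothAux in
/-- If `f` and `g` are squarefree binary forms of degree `d ≥ 1` over an algebraically
closed field of characteristic zero, then the surface `f(x₁,x₂) + g(y₁,y₂) = 0` in `ℙ³`
is smooth: the defining polynomial and its four partial derivatives have no common zero
other than the origin. -/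
theorem smooth_sum_of_squarefree_binary_forms
    {k : Type*} [Field k] [IsAlgClosed k] [CharZero k]
    (d : ℕ) (hd : 1 ≤ d)
    (f g : MvPolynomial (Fin 2) k)
    (hf : f.IsHomogeneous d) (hg : g.IsHomogeneous d)
    (hfsf : Squarefree f) (hgsf : Squarefree g) :
    ∀ v : Fin 4 → k, v ≠ 0 →
      ¬ (eval v (rename (fun i : Fin 2 => i.castLE (by norm_num)) f +
            rename (fun i : Fin 2 => i.addNat 2) g) = 0 ∧
         ∀ i : Fin 4,
           eval v (pderiv i (rename (fun i : Fin 2 => i.castLE (by norm_num)) f +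
             rename (fun i : Fin 2 => i.addNat 2) g)) = 0) := by
  intro v hv hcon
  obtain ⟨-, hgrad⟩ := hcon
  set ι₁ : Fin 2 → Fin 4 := fun i => i.castLE (by norm_num) with hι₁
  set ι₂ : Fin 2 → Fin 4 := fun i => i.addNat 2 with hι₂
  have hv1 : ∀ j : Fin 2, (ι₁ j).val = j.val := fun j => rfl
  have hv2 : ∀ j : Fin 2, (ι₂ j).val = j.val + 2 := fun j => rfl
  have hι₁inj : Function.Injective ι₁ := fun x y hxy => by
    have := congrArg Fin.val hxy
    rw [hv1, hv1] at this
    exact Fin.ext this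
  have hι₂inj : Function.Injective ι₂ := fun x y hxy => by
    have := congrArg Fin.val hxy
    rw [hv2, hv2] at this
    exact Fin.ext (by omega)
  have hBf : ∀ j : Fin 2, pderiv (ι₂ j) (rename ι₁ f) = 0 := by
    intro j
    apply pderiv_eq_zero_of_notMem_vars
    intro hmem
    obtain ⟨j', _, hj'⟩ := Finset.mem_image.mp (vars_rename ι₁ f hmem)
    have h1 : (ι₁ j').val = j'.val := rfl
    have h2 : (ι₂ j).val = j.val + 2 := rfl
    have := congrArg Fin.val hj'
    omega
  have hBg : ∀ j : Fin 2, pderiv (ι₁ j) (rename ι₂ g) = 0 := by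
    intro j
    apply pderiv_eq_zero_of_notMem_vars
    intro hmem
    obtain ⟨j', _, hj'⟩ := Finset.mem_image.mp (vars_rename ι₂ g hmem)
    have h1 : (ι₂ j').val = j'.val + 2 := rfl
    have h2 : (ι₁ j).val = j.val := rfl
    have := congrArg Fin.val hj'
    omega
  have hfj : ∀ j : Fin 2, eval (v ∘ ι₁) (pderiv j f) = 0 := by
    intro j
    have hz := hgrad (ι₁ j)
    rw [map_add, pderiv_rename hι₁inj, hBg j, add_zero, eval_rename] at hz
    exact hz
  have hgj : ∀ j : Fin 2, eval (v ∘ ι₂) (pderiv j g) = 0 := by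
    intro j
    have hz := hgrad (ι₂ j)
    rw [map_add, pderiv_rename hι₂inj, hBf j, zero_add, eval_rename] at hz
    exact hz
  have hvι₁ : v ∘ ι₁ = ![v (ι₁ 0), v (ι₁ 1)] := by
    funext i
    fin_cases i <;> rfl
  have hvι₂ : v ∘ ι₂ = ![v (ι₂ 0), v (ι₂ 1)] := by
    funext i
    fin_cases i <;> rfl
  have h12 : v (ι₁ 0) = 0 ∧ v (ι₁ 1) = 0 := by
    apply key' hd hf hfsf
    · rw [← hvι₁]; exact hfj 0
    · rw [← hvι₁]; exact hfj 1
  have h34 : v (ι₂ 0) = 0 ∧ v (ι₂ 1) = 0 := by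
    apply key' hd hg hgsf
    · rw [← hvι₂]; exact hgj 0
    · rw [← hvι₂]; exact hgj 1
  apply hv
  funext i
  have e0 : ι₁ 0 = (0 : Fin 4) := rfl
  have e1 : ι₁ 1 = (1 : Fin 4) := rfl
  have e2 : ι₂ 0 = (2 : Fin 4) := rfl
  have e3 : ι₂ 1 = (3 : Fin 4) := rfl
  fin_cases i
  · show v 0 = 0; rw [← e0]; exact h12.1
  · show v 1 = 0; rw [← e1]; exact h12.2
  · show v 2 = 0; rw [← e2]; exact h34.1
  · show v 3 = 0; rw [← e3]; exact h34.2
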